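/- arXiv:1912.11895 — 3 statements merged into one kernel-verified Lean document; each statement's English description precedes it below -/
import Mathlib

section
/- (W5 identity, n=3 case) For three sufficiently differentiable functions f₁, f₂, f₃: Wr(Wr(f₁,f₂), Wr(f₁,f₃)) = f₁ · Wr(f₁,f₂,f₃). -/
noncomputable def Wr2 (f g : ℝ → ℝ) : ℝ → ℝ := fun x => f x * deriv g x - deriv f x * g x

noncomputable def Wr3 (f₁ f₂ f₃ : ℝ → ℝ) : ℝ → ℝ := fun x =>
  Matrix.det (Matrix.of fun a b : Fin 3 => deriv^[(a : ℕ)] (![f₁, f₂, f₃] b) x)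

lemma deriv_Wr2 (f g : ℝ → ℝ) (hf : ContDiff ℝ (⊤ : ℕ∞) f) (hg : ContDiff ℝ (⊤ : ℕ∞) g) (x : ℝ) :
    deriv (Wr2 f g) x = f x * deriv (deriv g) x - deriv (deriv f) x * g x := by
  have hf2 : ContDiff ℝ 2 f := hf.of_le (WithTop.coe_le_coe.mpr (le_top : (2:ℕ∞) ≤ ⊤))
  have hg2 : ContDiff ℝ 2 g := hg.of_le (WithTop.coe_le_coe.mpr (le_top : (2:ℕ∞) ≤ ⊤))
  have hdf : ContDiff ℝ 1 (deriv f) :=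
    ((contDiff_succ_iff_deriv (n := 1)).mp (by exact_mod_cast hf2)).2.2
  have hdg : ContDiff ℝ 1 (deriv g) :=
    ((contDiff_succ_iff_deriv (n := 1)).mp (by exact_mod_cast hg2)).2.2
  have h1 : HasDerivAt (fun x => f x * deriv g x - deriv f x * g x)
      (f x * deriv (deriv g) x - deriv (deriv f) x * g x) x := by
    have := ((hf2.differentiable two_ne_zero x).hasDerivAt.mul
        (hdg.differentiable one_ne_zero x).hasDerivAt).sub
      (((hdf.differentiable one_ne_zero x).hasDerivAt).mul (hg2.differentiable two_ne_zero x).hasDerivAt)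
    refine this.congr_deriv ?_
    ring
  exact h1.deriv

theorem stmt8 (f₁ f₂ f₃ : ℝ → ℝ) (h₁ : ContDiff ℝ (⊤ : ℕ∞) f₁) (h₂ : ContDiff ℝ (⊤ : ℕ∞) f₂)
    (h₃ : ContDiff ℝ (⊤ : ℕ∞) f₃) :
    Wr2 (Wr2 f₁ f₂) (Wr2 f₁ f₃) = fun x => f₁ x * Wr3 f₁ f₂ f₃ x := by
  funext x
  show Wr2 f₁ f₂ x * deriv (Wr2 f₁ f₃) x - deriv (Wr2 f₁ f₂) x * Wr2 f₁ f₃ x = _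
  rw [deriv_Wr2 f₁ f₂ h₁ h₂, deriv_Wr2 f₁ f₃ h₁ h₃]
  simp only [Wr2, Wr3, Matrix.det_fin_three, Matrix.of_apply, Matrix.cons_val', Matrix.cons_val_zero,
    Matrix.cons_val_one, Matrix.head_cons, Matrix.empty_val', Matrix.cons_val_fin_one,
    Matrix.head_fin_const, Matrix.cons_val_two, Matrix.tail_cons]
  norm_num [Function.iterate_succ_apply', -Function.iterate_succ]
  ring
end

section
/- (W5 identity, general case) For smooth functions f₁,...,f_{a+2}, let A = {1,...,a+1} and B = {1,...,a, a+2}. Then Wr(Wr(f₁,...,f_{a+1}), Wr(f₁,...,f_a,f_{a+2})) = Wr(f₁,...,f_a) · Wr(f₁,...,f_{a+2}). -/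
open Matrix Finset

/-- Wronskian of `m` functions. -/
noncomputable def W (m : ℕ) (g : Fin m → ℝ → ℝ) : ℝ → ℝ := fun x =>
  Matrix.det (Matrix.of fun i j : Fin m => deriv^[(i : ℕ)] (g j) x)

namespace W5aux

def rn (n : ℕ) : Fin (n+2) := ⟨n, by omega⟩
def rl (n : ℕ) : Fin (n+2) := Fin.last (n+1)

lemma dj_mul {R : Type*} [CommRing R] {n : ℕ} (M : Matrix (Fin (n+2)) (Fin (n+2)) R) :
    M.det * (M.det * (M.submatrix (Fin.castAdd 2) (Fin.castAdd 2)).det)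
    = M.det * ((M.submatrix (rn n).succAbove (rn n).succAbove).det *
          (M.submatrix (rl n).succAbove (rl n).succAbove).det
        - (M.submatrix (rl n).succAbove (rn n).succAbove).det *
          (M.submatrix (rn n).succAbove (rl n).succAbove).det) := by
  classical
  set e : Fin n ⊕ Fin 2 ≃ Fin (n+2) := finSumFinEquiv with he
  set C : Matrix (Fin (n+2)) (Fin (n+2)) R :=
    Matrix.of (fun i j : Fin (n+2) => if (j : ℕ) < n then (if i = j then (1:R) else 0) else M.adjugate i j)
    with hC
  have hMC : M * C = Matrix.of (fun i j : Fin (n+2) =>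
      if (j : ℕ) < n then M i j else M.det * (if i = j then 1 else 0)) := by
    ext i j
    by_cases h : (j : ℕ) < n
    · simp [Matrix.mul_apply, hC, h, mul_ite]
    · have h2 : (M * M.adjugate) i j = (M.det • (1 : Matrix (Fin (n+2)) (Fin (n+2)) R)) i j := by
        rw [Matrix.mul_adjugate]
      simp only [Matrix.smul_apply, Matrix.one_apply, smul_eq_mul] at h2
      simp only [Matrix.mul_apply, hC, h, Matrix.of_apply, if_false]
      simpa [Matrix.mul_apply] using h2
  -- block structure of M * C
  have hMCblock : (M * C).submatrix e e =
      Matrix.fromBlocks (M.submatrix (Fin.castAdd 2) (Fin.castAdd 2)) 0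
        ((M * C).submatrix (fun i : Fin 2 => e (Sum.inr i)) (fun j : Fin n => e (Sum.inl j)))
        (M.det • 1) := by
    ext i j
    rcases i with i | i <;> rcases j with j | j <;>
      simp only [Matrix.submatrix_apply, Matrix.fromBlocks_apply₁₁, Matrix.fromBlocks_apply₁₂,
        Matrix.fromBlocks_apply₂₁, Matrix.fromBlocks_apply₂₂, he, finSumFinEquiv_apply_left,
        finSumFinEquiv_apply_right, hMC, Matrix.of_apply]
    · simp [Fin.coe_castAdd, j.isLt]
    · have hne : Fin.castAdd 2 i ≠ Fin.natAdd n j := by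
        simp [Fin.ext_iff]; omega
      simp [hne]
    · by_cases hij : i = j
      · simp [hij, Matrix.one_apply]
      · have hne : Fin.natAdd n i ≠ Fin.natAdd n j := by
          intro h; exact hij (Fin.ext (by have := Fin.ext_iff.mp h; simp at this; omega))
        simp [hne, hij, Matrix.one_apply]
  have hCblock : C.submatrix e e =
      Matrix.fromBlocks 1
        (C.submatrix (fun i : Fin n => e (Sum.inl i)) (fun j : Fin 2 => e (Sum.inr j)))
        0
        (C.submatrix (fun i : Fin 2 => e (Sum.inr i)) (fun j : Fin 2 => e (Sum.inr j))) := by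
    ext i j
    rcases i with i | i <;> rcases j with j | j
    · simp only [Matrix.submatrix_apply, Matrix.fromBlocks_apply₁₁, he,
        finSumFinEquiv_apply_left, hC, Matrix.of_apply]
      rw [if_pos (by simpa [Fin.coe_castAdd] using j.isLt)]
      by_cases hij : i = j
      · simp [hij, Matrix.one_apply]
      · have hne : Fin.castAdd 2 i ≠ Fin.castAdd 2 j := by
          intro h; exact hij (Fin.ext (by simpa [Fin.ext_iff] using h))
        simp [hne, hij, Matrix.one_apply]
    · rfl
    · simp only [Matrix.submatrix_apply, Matrix.fromBlocks_apply₂₁, he,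
        finSumFinEquiv_apply_left, finSumFinEquiv_apply_right, hC, Matrix.of_apply,
        Matrix.zero_apply]
      rw [if_pos (by simpa [Fin.coe_castAdd] using j.isLt)]
      have hne : Fin.natAdd n i ≠ Fin.castAdd 2 j := by
        simp [Fin.ext_iff]; omega
      simp [hne]
    · rfl
  set P := M.submatrix (Fin.castAdd 2) (Fin.castAdd 2) with hP
  have hdetMC : (M * C).det = P.det * (M.det * M.det) := by
    rw [← Matrix.det_submatrix_equiv_self e, hMCblock, Matrix.det_fromBlocks_zero₁₂,
      Matrix.det_smul, Matrix.det_one]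
    simp [Fintype.card_fin]
    ring
  set D := C.submatrix (fun i : Fin 2 => e (Sum.inr i)) (fun j : Fin 2 => e (Sum.inr j)) with hD
  have hdetC : C.det = D.det := by
    rw [← Matrix.det_submatrix_equiv_self e, hCblock, Matrix.det_fromBlocks_zero₂₁,
      Matrix.det_one, one_mul]
  have h0 : e (Sum.inr 0) = rn n := by
    simp [he, finSumFinEquiv_apply_right, rn, Fin.ext_iff]
  have h1 : e (Sum.inr 1) = rl n := by
    simp [he, finSumFinEquiv_apply_right, rl, Fin.ext_iff, Fin.last]
  have hCentry : ∀ i j : Fin (n+2), ¬ ((j : ℕ) < n) → C i j = M.adjugate i j := by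
    intro i j h
    simp [hC, h]
  have hdetD : D.det = M.adjugate (rn n) (rn n) * M.adjugate (rl n) (rl n)
      - M.adjugate (rn n) (rl n) * M.adjugate (rl n) (rn n) := by
    rw [hD, Matrix.det_fin_two]
    simp only [Matrix.submatrix_apply, h0, h1]
    rw [hCentry _ _ (by simp [rn]), hCentry _ _ (by simp [rl, Fin.last]),
      hCentry _ _ (by simp [rl, Fin.last]), hCentry _ _ (by simp [rn])]
  have hrnval : ((rn n : Fin (n+2)) : ℕ) = n := rfl
  have hrlval : ((rl n : Fin (n+2)) : ℕ) = n + 1 := rfl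
  have ha1 : M.adjugate (rn n) (rn n) =
      (-1 : R) ^ (n + n) * (M.submatrix (rn n).succAbove (rn n).succAbove).det := by
    rw [Matrix.adjugate_fin_succ_eq_det_submatrix, hrnval]
  have ha2 : M.adjugate (rl n) (rl n) =
      (-1 : R) ^ ((n+1) + (n+1)) * (M.submatrix (rl n).succAbove (rl n).succAbove).det := by
    rw [Matrix.adjugate_fin_succ_eq_det_submatrix, hrlval]
  have ha3 : M.adjugate (rn n) (rl n) =
      (-1 : R) ^ ((n+1) + n) * (M.submatrix (rl n).succAbove (rn n).succAbove).det := by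
    rw [Matrix.adjugate_fin_succ_eq_det_submatrix, hrnval, hrlval]
  have ha4 : M.adjugate (rl n) (rn n) =
      (-1 : R) ^ (n + (n+1)) * (M.submatrix (rn n).succAbove (rl n).succAbove).det := by
    rw [Matrix.adjugate_fin_succ_eq_det_submatrix, hrnval, hrlval]
  have hsign : D.det = (M.submatrix (rn n).succAbove (rn n).succAbove).det *
          (M.submatrix (rl n).succAbove (rl n).succAbove).det
        - (M.submatrix (rl n).succAbove (rn n).succAbove).det *
          (M.submatrix (rn n).succAbove (rl n).succAbove).det := by
    rw [hdetD, ha1, ha2, ha3, ha4]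
    have e1 : (-1 : R) ^ (n + n) = 1 := Even.neg_one_pow ⟨n, rfl⟩
    have e2 : (-1 : R) ^ ((n+1) + (n+1)) = 1 := Even.neg_one_pow ⟨n+1, rfl⟩
    have e3 : (-1 : R) ^ ((n+1) + n) * (-1 : R) ^ (n + (n+1)) = 1 := by
      rw [← pow_add]; exact Even.neg_one_pow ⟨2*n+1, by ring⟩
    rw [e1, e2, one_mul, one_mul, mul_mul_mul_comm, e3, one_mul]
  have hmul : M.det * C.det = P.det * (M.det * M.det) := by
    rw [← Matrix.det_mul, hdetMC]
  calc M.det * (M.det * P.det) = M.det * C.det := by rw [hmul]; ring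
    _ = _ := by rw [hdetC, hsign]

lemma dj {n : ℕ} (M : Matrix (Fin (n+2)) (Fin (n+2)) ℝ) :
    M.det * (M.submatrix (Fin.castAdd 2) (Fin.castAdd 2)).det
    = (M.submatrix (rn n).succAbove (rn n).succAbove).det *
          (M.submatrix (rl n).succAbove (rl n).succAbove).det
        - (M.submatrix (rl n).succAbove (rn n).succAbove).det *
          (M.submatrix (rn n).succAbove (rl n).succAbove).det := by
  classical
  set X : Matrix (Fin (n+2)) (Fin (n+2)) (MvPolynomial (Fin (n+2) × Fin (n+2)) ℤ) :=
    Matrix.mvPolynomialX (Fin (n+2)) (Fin (n+2)) ℤ with hXdef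
  have hX : X.det ≠ 0 := Matrix.det_mvPolynomialX_ne_zero _ ℤ
  have hgen := mul_left_cancel₀ hX (dj_mul X)
  set φ : MvPolynomial (Fin (n+2) × Fin (n+2)) ℤ →+* ℝ :=
    (MvPolynomial.eval₂Hom (Int.castRingHom ℝ) (fun p : Fin (n+2) × Fin (n+2) => M p.1 p.2)) with hφ
  have hXM : X.map φ = M := by
    ext i j
    simp [hXdef, hφ]
  have key := congrArg φ hgen
  simp only [_root_.map_mul, map_sub, RingHom.map_det] at key
  have hsub : ∀ (k : ℕ) (r c : Fin k → Fin (n+2)),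
      (φ.mapMatrix (X.submatrix r c)).det = (M.submatrix r c).det := by
    intro k r c
    congr 1
    ext i j
    simp only [RingHom.mapMatrix_apply, Matrix.map_apply, Matrix.submatrix_apply]
    rw [← hXM]
    rfl
  rw [hsub, hsub, hsub, hsub, hsub] at key
  rwa [show φ.mapMatrix X = M from hXM] at key


lemma W_eq (m : ℕ) (g : Fin m → ℝ → ℝ) (y : ℝ) :
    W m g y = ∑ σ : Equiv.Perm (Fin m),
      ((Equiv.Perm.sign σ : ℤ) : ℝ) * ∏ i : Fin m, deriv^[(i : ℕ)] (g (σ i)) y := by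
  rw [W, ← Matrix.det_transpose, Matrix.det_apply']
  rfl

lemma hasDerivAt_W (m : ℕ) (g : Fin m → ℝ → ℝ) (hg : ∀ j, ContDiff ℝ (⊤ : ℕ∞) (g j)) (x : ℝ) :
    HasDerivAt (W m g)
      (∑ k : Fin m, Matrix.det (Matrix.of fun i j : Fin m =>
        deriv^[if i = k then (i : ℕ) + 1 else (i : ℕ)] (g j) x)) x := by
  have hfun : W m g = fun y => ∑ σ : Equiv.Perm (Fin m),
      ((Equiv.Perm.sign σ : ℤ) : ℝ) * ∏ i : Fin m, deriv^[(i : ℕ)] (g (σ i)) y :=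
    funext (W_eq m g)
  rw [hfun]
  have hd : ∀ σ : Equiv.Perm (Fin m),
      HasDerivAt (fun y => ∏ i : Fin m, deriv^[(i : ℕ)] (g (σ i)) y)
        (∑ k : Fin m, (∏ j ∈ Finset.univ.erase k, deriv^[(j : ℕ)] (g (σ j)) x) *
          deriv^[(k : ℕ) + 1] (g (σ k)) x) x := by
    intro σ
    have h := HasDerivAt.fun_finsetProd (u := Finset.univ)
      (f := fun (i : Fin m) (y : ℝ) => deriv^[(i : ℕ)] (g (σ i)) y)
      (f' := fun i => deriv^[(i : ℕ) + 1] (g (σ i)) x) (x := x) ?_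
    · simpa [smul_eq_mul] using h
    · intro i _
      have hdiff : Differentiable ℝ (deriv^[(i : ℕ)] (g (σ i))) :=
        (ContDiff.iterate_deriv (i : ℕ) ((hg (σ i)).of_le (by simp))).differentiable
          (by simp)
      have h2 := (hdiff x).hasDerivAt
      rwa [show deriv (deriv^[(i : ℕ)] (g (σ i))) x = deriv^[(i : ℕ) + 1] (g (σ i)) x from
        (congrFun (Function.iterate_succ_apply' deriv (i : ℕ) (g (σ i))) x).symm] at h2
  have H := HasDerivAt.fun_sum (u := Finset.univ)
    (A := fun (σ : Equiv.Perm (Fin m)) (y : ℝ) =>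
      ((Equiv.Perm.sign σ : ℤ) : ℝ) * ∏ i : Fin m, deriv^[(i : ℕ)] (g (σ i)) y)
    (A' := fun σ => ((Equiv.Perm.sign σ : ℤ) : ℝ) * ∑ k : Fin m,
      (∏ j ∈ Finset.univ.erase k, deriv^[(j : ℕ)] (g (σ j)) x) * deriv^[(k : ℕ) + 1] (g (σ k)) x)
    (fun σ _ => (hd σ).const_mul _)
  refine H.congr_deriv ?_
  symm
  simp only [Finset.mul_sum]
  rw [Finset.sum_comm]
  refine Finset.sum_congr rfl fun k _ => ?_
  rw [← Matrix.det_transpose, Matrix.det_apply']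
  refine Finset.sum_congr rfl fun σ _ => ?_
  simp only [Matrix.transpose_apply, Matrix.of_apply]
  rw [← Finset.mul_prod_erase Finset.univ _ (Finset.mem_univ k), if_pos rfl,
    Finset.prod_congr rfl (fun i hi => by rw [if_neg (Finset.ne_of_mem_erase hi)])]
  ring



lemma sum_detrows (m : ℕ) (g : Fin (m+1) → ℝ → ℝ) (x : ℝ) :
    (∑ k : Fin (m+1), Matrix.det (Matrix.of fun i j : Fin (m+1) =>
        deriv^[if i = k then (i : ℕ) + 1 else (i : ℕ)] (g j) x))
    = Matrix.det (Matrix.of fun i j : Fin (m+1) =>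
        deriv^[if i = Fin.last m then (i : ℕ) + 1 else (i : ℕ)] (g j) x) := by
  rw [Finset.sum_eq_single (Fin.last m)]
  · intro k _ hk
    have hks : (k : ℕ) < m := by
      have := k.isLt
      rcases Nat.lt_or_ge (k : ℕ) m with h | h
      · exact h
      · exact absurd (Fin.ext (by omega : (k : ℕ) = m)) hk
    set k' : Fin (m+1) := ⟨(k : ℕ) + 1, by omega⟩ with hk'
    apply Matrix.det_zero_of_row_eq (i := k) (j := k')
    · intro h
      have := Fin.ext_iff.mp h
      simp [hk'] at this
    · funext j
      have h1 : (k : Fin (m+1)) = k := rfl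
      have hne : k' ≠ k := by
        intro h
        have := Fin.ext_iff.mp h
        simp [hk'] at this
      simp only [Matrix.of_apply, if_pos rfl, if_neg hne, hk']
      simp [Fin.ext_iff]
  · intro h
    exact absurd (Finset.mem_univ _) h

lemma deriv_W (m : ℕ) (g : Fin (m+1) → ℝ → ℝ) (hg : ∀ j, ContDiff ℝ (⊤ : ℕ∞) (g j)) (x : ℝ) :
    deriv (W (m+1) g) x = Matrix.det (Matrix.of fun i j : Fin (m+1) =>
        deriv^[if i = Fin.last m then (i : ℕ) + 1 else (i : ℕ)] (g j) x) := by
  rw [← sum_detrows m g x]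
  exact (hasDerivAt_W (m+1) g hg x).deriv

end W5aux

open W5aux in
theorem stmt9 (a : ℕ) (f : ℕ → ℝ → ℝ) (hf : ∀ n, ContDiff ℝ (⊤ : ℕ∞) (f n)) :
    Wr2 (W (a + 1) (fun j => f j))
        (W (a + 1) (fun j => if (j : ℕ) < a then f j else f (a + 1))) =
    fun x => W a (fun j => f j) x * W (a + 2) (fun j => f j) x := by
  funext x
  set F : Matrix (Fin (a+2)) (Fin (a+2)) ℝ :=
    Matrix.of (fun i j : Fin (a+2) => deriv^[(i : ℕ)] (f j) x) with hF
  have hcl : ∀ j : Fin (a+1), (((rn a).succAbove j) : ℕ) =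
      if (j : ℕ) < a then (j : ℕ) else (j : ℕ) + 1 := by
    intro j
    unfold Fin.succAbove
    by_cases h : (j : ℕ) < a
    · rw [if_pos (by simpa [Fin.lt_def, rn] using h), if_pos h]
      rfl
    · rw [if_neg (by simpa [Fin.lt_def, rn] using h), if_neg h]
      rfl
  have hrow : ∀ i : Fin (a+1), (((rn a).succAbove i) : ℕ) =
      if i = Fin.last a then (i : ℕ) + 1 else (i : ℕ) := by
    intro i
    rw [hcl i]
    by_cases h : (i : ℕ) < a
    · rw [if_pos h, if_neg (by intro hh; rw [hh] at h; simp [Fin.last] at h)]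
    · have hia : (i : ℕ) = a := by have := i.isLt; omega
      rw [if_neg h, if_pos (Fin.ext (by simp [Fin.last, hia]))]
  have hsmall : W a (fun j => f j) x = (F.submatrix (Fin.castAdd 2) (Fin.castAdd 2)).det := by
    rw [W]; exact congrArg Matrix.det (by ext i j; simp [hF])
  have hbig : W (a+2) (fun j => f j) x = F.det := rfl
  have hWA : W (a+1) (fun j => f j) x =
      (F.submatrix (rl a).succAbove (rl a).succAbove).det := by
    rw [W]
    exact congrArg Matrix.det (by ext i j; simp [hF, rl, Fin.succAbove_last])
  have hWB : W (a+1) (fun j => if (j : ℕ) < a then f j else f (a+1)) x =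
      (F.submatrix (rl a).succAbove (rn a).succAbove).det := by
    rw [W]
    refine congrArg Matrix.det ?_
    ext i j
    simp only [Matrix.of_apply, Matrix.submatrix_apply, hF, rl, Fin.succAbove_last,
      Fin.coe_castSucc, hcl]
    by_cases h : (j : ℕ) < a
    · rw [if_pos h, if_pos h]
    · rw [if_neg h, if_neg h]
      have hja : (j : ℕ) = a := by have := j.isLt; omega
      rw [hja]
  have hgB : ∀ j : Fin (a+1), ContDiff ℝ (⊤ : ℕ∞)
      ((fun j : Fin (a+1) => if (j : ℕ) < a then f j else f (a+1)) j) := by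
    intro j
    by_cases h : (j : ℕ) < a
    · simpa [h] using hf j
    · simpa [h] using hf (a+1)
  have hWA' : deriv (W (a+1) (fun j => f j)) x =
      (F.submatrix (rn a).succAbove (rl a).succAbove).det := by
    rw [deriv_W a _ (fun j => hf j) x]
    refine congrArg Matrix.det ?_
    ext i j
    simp only [Matrix.of_apply, Matrix.submatrix_apply, hF, rl, Fin.succAbove_last,
      Fin.coe_castSucc, hrow]
  have hWB' : deriv (W (a+1) (fun j => if (j : ℕ) < a then f j else f (a+1))) x =
      (F.submatrix (rn a).succAbove (rn a).succAbove).det := by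
    rw [deriv_W a _ hgB x]
    refine congrArg Matrix.det ?_
    ext i j
    simp only [Matrix.of_apply, Matrix.submatrix_apply, hF, hrow]
    by_cases h : (j : ℕ) < a
    · have hjl : j ≠ Fin.last a := by
        intro hh; rw [hh] at h; simp [Fin.last] at h
      rw [if_neg hjl, if_pos h]
    · have hja : (j : ℕ) = a := by have := j.isLt; omega
      have hjl : j = Fin.last a := Fin.ext (by simp [Fin.last, hja])
      rw [if_pos hjl, if_neg h, hja]
  have hdj := dj (n := a) F
  show W (a+1) (fun j => f j) x * deriv (W (a+1) (fun j => if (j : ℕ) < a then f j else f (a+1))) x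
      - deriv (W (a+1) (fun j => f j)) x * W (a+1) (fun j => if (j : ℕ) < a then f j else f (a+1)) x
      = _
  rw [hWA, hWB, hWA', hWB', hsmall, hbig]
  rw [show (F.submatrix (Fin.castAdd 2) (Fin.castAdd 2)).det * F.det
      = F.det * (F.submatrix (Fin.castAdd 2) (Fin.castAdd 2)).det from mul_comm _ _, hdj]
  ring
end

section
/- The pair of quadratic polynomials (1 + e₁x + e₂x²/2, 1 + f₁x + f₂x²/2) lies in the image of the Wronski map W(b) = (b₁, Wr(b₁,b₂)) applied to triples (1+ax+bx²/2, x+cx²/2, x²/2) if and only if e₂ + f₂ = e₁f₁. -/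
/-! Wr(b₁, b₂) = 1 + c x + (ac − b) x²/2, so matching coefficients forces (a, b, c) = (e₁, e₂, f₁)
and leaves the single condition e₁f₁ − e₂ = f₂. -/

open Polynomial

noncomputable def Wr (f g : Polynomial ℂ) : Polynomial ℂ :=
  f * derivative g - derivative f * g

theorem one_add_C_mul_X_add_C_mul_X_sq_inj {R : Type*} [Semiring R] {p q r s : R} :
    1 + C p * X + C q * X ^ 2 = 1 + C r * X + C s * X ^ 2 ↔ p = r ∧ q = s := by
  refine ⟨fun h => ⟨?_, ?_⟩, by rintro ⟨rfl, rfl⟩; rfl⟩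
  · simpa [coeff_one] using congrArg (coeff · 1) h
  · simpa [coeff_one] using congrArg (coeff · 2) h

theorem Wr_quadratic_pair (a b c : ℂ) :
    Wr (1 + C a * X + C (b / 2) * X ^ 2) (X + C (c / 2) * X ^ 2) =
      1 + C c * X + C ((a * c - b) / 2) * X ^ 2 := by
  have two_mul_C_half : (2 : ℂ[X]) * C 2⁻¹ = 1 := by
    rw [← C_ofNat, ← C_mul, mul_inv_cancel₀ two_ne_zero, C_1]
  simp only [Wr, derivative_add, derivative_one, derivative_mul, derivative_C, derivative_X,
    derivative_X_pow, div_eq_mul_inv, map_mul, map_sub, Nat.cast_ofNat, C_ofNat]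
  linear_combination (C c * X) * two_mul_C_half

theorem stmt12 (e₁ e₂ f₁ f₂ : ℂ) :
    (∃ a b c : ℂ,
        (1 + C a * X + C (b / 2) * X ^ 2 = 1 + C e₁ * X + C (e₂ / 2) * X ^ 2) ∧
        Wr (1 + C a * X + C (b / 2) * X ^ 2) (X + C (c / 2) * X ^ 2) =
          1 + C f₁ * X + C (f₂ / 2) * X ^ 2) ↔
      e₂ + f₂ = e₁ * f₁ := by
  simp only [Wr_quadratic_pair, one_add_C_mul_X_add_C_mul_X_sq_inj,
    div_left_inj' (two_ne_zero' ℂ)]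
  constructor
  · rintro ⟨a, b, c, ⟨rfl, rfl⟩, rfl, rfl⟩
    ring
  · intro h
    exact ⟨e₁, e₂, f₁, ⟨rfl, rfl⟩, rfl, by linear_combination -h⟩
end
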